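/- Every algebraic and spatial lattice is isomorphic to a direct product of directly indecomposable lattices (Libkin's Decomposition Theorem). -/

import Mathlib

universe u

/-- An element `a` of a lattice is *neutral* if every triple `{a, x, y}`
generates a distributive sublattice; we use the standard equational
characterization. -/
def IsNeutral {L : Type*} [Lattice L] (a : L) : Prop :=
  ∀ x y : L, (a ⊔ x) ⊓ (a ⊔ y) ⊓ (x ⊔ y) = (a ⊓ x) ⊔ (a ⊓ y) ⊔ (x ⊓ y)

/-- An element of a bounded lattice is *central* if it is neutral and complemented. -/
def IsCentral {L : Type*} [Lattice L] [BoundedOrder L] (a : L) : Prop :=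
  IsNeutral a ∧ ∃ b : L, a ⊓ b = ⊥ ∧ a ⊔ b = ⊤

/-- `a` is an atom of the center `Cen L`. -/
def IsCenterAtom {L : Type*} [Lattice L] [BoundedOrder L] (a : L) : Prop :=
  IsCentral a ∧ a ≠ ⊥ ∧ ∀ b : L, IsCentral b → b < a → b = ⊥

/-- A bounded lattice is *directly indecomposable* if whenever it is isomorphic to a
product of two bounded lattices, one of the factors is trivial. -/
def DirectlyIndecomposable (M : Type u) [Lattice M] [BoundedOrder M] : Prop :=
  ∀ A B : BddLat.{u}, Nonempty (M ≃o ↥A × ↥B) → Subsingleton ↥A ∨ Subsingleton ↥B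

/-- A bounded lattice is *totally decomposable* if it is isomorphic to a direct product
of directly indecomposable lattices. -/
def TotallyDecomposable (M : Type u) [Lattice M] [BoundedOrder M] : Prop :=
  ∃ (ι : Type u) (F : ι → BddLat.{u}),
    (∀ i, DirectlyIndecomposable ↥(F i)) ∧ Nonempty (M ≃o ∀ i, ↥(F i))

/-- `p` is completely join-irreducible: `p ≠ ⊥` and the join of all elements
strictly below `p` is strictly below `p` (i.e. `p` has a unique lower cover). -/
def CompletelySupIrred {L : Type*} [CompleteLattice L] (p : L) : Prop :=
  p ≠ ⊥ ∧ sSup {v : L | v < p} < p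

/-!
Call `a` central if it is neutral and has a complement `a'`; then `x ↦ (x ⊓ a, x ⊓ a')` splits
`L` as `[⊥, a] × [⊥, a']`, so a completely join-irreducible `p` lies below `a` or below `a'`.
In an algebraic spatial lattice the meet `A` of all central elements above such a `p` is again
central: its complement is the join `B` of the neutral elements disjoint from `A`, the law
`A ⊓ (u ⊔ B) = u` coming from upper continuity and the remaining identities from testing against
completely join-irreducible elements. So `A` is an atom of the center, the center atoms are
pairwise disjoint, and every `p` lies below one of them; hence `x ↦ (x ⊓ a)_a` maps `L`
isomorphically onto `∏ [⊥, a]`. Each factor is directly indecomposable, since its central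
elements are central in `L`.
-/

open Set

section Neutral

variable {L : Type*} [Lattice L]

lemma IsNeutral.sup_inf_sup_le [OrderBot L] {d x : L} (hd : IsNeutral d) (hdx : d ⊓ x = ⊥)
    (w : L) : (d ⊔ x) ⊓ (d ⊔ w) ⊓ (x ⊔ w) ≤ w := by
  rw [hd, hdx, bot_sup_eq]
  exact sup_le inf_le_right inf_le_right

lemma IsNeutral.inf_sup_self_le [OrderBot L] {d x : L} (hd : IsNeutral d) (hdx : d ⊓ x = ⊥)
    (w : L) : x ⊓ (w ⊔ d) ≤ w :=
  le_trans (le_inf (le_inf (inf_le_left.trans le_sup_right) (inf_le_right.trans (by simp)))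
    (inf_le_left.trans le_sup_left)) (hd.sup_inf_sup_le hdx w)

lemma IsNeutral.self_inf_sup_le [OrderBot L] {d x : L} (hd : IsNeutral d) (hdx : d ⊓ x = ⊥)
    (w : L) : d ⊓ (w ⊔ x) ≤ w :=
  le_trans (le_inf (le_inf (inf_le_left.trans le_sup_left) (inf_le_left.trans le_sup_left))
    (inf_le_right.trans (by simp))) (hd.sup_inf_sup_le hdx w)

lemma isNeutral_bot [OrderBot L] : IsNeutral (⊥ : L) := by
  intro x y
  simp only [bot_sup_eq, bot_inf_eq]
  exact inf_eq_left.2 (inf_le_left.trans le_sup_left)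

lemma isNeutral_top [OrderTop L] : IsNeutral (⊤ : L) := by
  intro x y
  simp only [top_sup_eq, top_inf_eq]
  exact (sup_eq_left.2 (inf_le_left.trans le_sup_left)).symm

lemma IsNeutral.map {M : Type*} [Lattice M] (e : L ≃o M) {a : L} (ha : IsNeutral a) :
    IsNeutral (e a) := by
  intro x y
  obtain ⟨x, rfl⟩ := e.surjective x
  obtain ⟨y, rfl⟩ := e.surjective y
  simp only [← OrderIso.map_sup, ← OrderIso.map_inf, ha x y]

variable {M : Type*} [Lattice M]

lemma IsNeutral.prod {a : L} {b : M} (ha : IsNeutral a) (hb : IsNeutral b) :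
    IsNeutral (a, b) :=
  fun x y => Prod.ext (ha x.1 y.1) (hb x.2 y.2)

lemma IsNeutral.fst {p : L × M} (h : IsNeutral p) : IsNeutral p.1 :=
  fun x y => congrArg Prod.fst (h (x, p.2) (y, p.2))

end Neutral

section Central

variable {L M : Type*} [Lattice L] [BoundedOrder L] [Lattice M] [BoundedOrder M]

lemma isCentral_bot : IsCentral (⊥ : L) := ⟨isNeutral_bot, ⊤, by simp, by simp⟩

lemma isCentral_top : IsCentral (⊤ : L) := ⟨isNeutral_top, ⊥, by simp, by simp⟩

lemma IsCentral.map (e : L ≃o M) {a : L} (ha : IsCentral a) : IsCentral (e a) := by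
  obtain ⟨hn, b, hinf, hsup⟩ := ha
  exact ⟨hn.map e, e b, by rw [← e.map_inf, hinf, e.map_bot],
    by rw [← e.map_sup, hsup, e.map_top]⟩

lemma IsCentral.prod {a : L} {b : M} (ha : IsCentral a) (hb : IsCentral b) :
    IsCentral (a, b) := by
  obtain ⟨hna, a', hia, hsa⟩ := ha
  obtain ⟨hnb, b', hib, hsb⟩ := hb
  exact ⟨hna.prod hnb, (a', b'), Prod.ext hia hib, Prod.ext hsa hsb⟩

lemma IsCentral.fst {p : L × M} (h : IsCentral p) : IsCentral p.1 := by
  obtain ⟨hn, q, hinf, hsup⟩ := h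
  exact ⟨hn.fst, q.1, congrArg Prod.fst hinf, congrArg Prod.fst hsup⟩

end Central

section DirectDecomposition

variable {L : Type*} [Lattice L]

/-- The conditions say that `x ↦ (x ⊓ a, x ⊓ b)` is an isomorphism `L ≃o [⊥, a] × [⊥, b]`
with inverse `(u, v) ↦ u ⊔ v`. -/
structure IsDirectDecomposition (a b : L) : Prop where
  inf_sup_inf : ∀ x : L, x ⊓ a ⊔ x ⊓ b = x
  inf_sup_left : ∀ u v : L, u ≤ a → v ≤ b → a ⊓ (u ⊔ v) = u
  inf_sup_right : ∀ u v : L, u ≤ a → v ≤ b → b ⊓ (u ⊔ v) = v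

namespace IsDirectDecomposition

variable {a b : L}

lemma symm (h : IsDirectDecomposition a b) : IsDirectDecomposition b a where
  inf_sup_inf x := sup_comm (x ⊓ a) (x ⊓ b) ▸ h.inf_sup_inf x
  inf_sup_left u v hu hv := sup_comm v u ▸ h.inf_sup_right v u hv hu
  inf_sup_right u v hu hv := sup_comm v u ▸ h.inf_sup_left v u hv hu

lemma inf_eq_bot [OrderBot L] (h : IsDirectDecomposition a b) : a ⊓ b = ⊥ := by
  simpa using h.inf_sup_left ⊥ b bot_le le_rfl

lemma le_right_of_inf_eq_bot [OrderBot L] (h : IsDirectDecomposition a b) {x : L}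
    (hx : x ⊓ a = ⊥) : x ≤ b := by
  rw [← h.inf_sup_inf x, hx, bot_sup_eq]
  exact inf_le_right

def orderIso (h : IsDirectDecomposition a b) : L ≃o Iic a × Iic b where
  toFun x := (⟨x ⊓ a, inf_le_right⟩, ⟨x ⊓ b, inf_le_right⟩)
  invFun p := (p.1 : L) ⊔ p.2
  left_inv x := h.inf_sup_inf x
  right_inv p := Prod.ext (Subtype.ext ((inf_comm _ _).trans (h.inf_sup_left _ _ p.1.2 p.2.2)))
    (Subtype.ext ((inf_comm _ _).trans (h.inf_sup_right _ _ p.1.2 p.2.2)))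
  map_rel_iff' {x y} := by
    refine ⟨fun hxy => ?_, fun hxy => ⟨inf_le_inf_right _ hxy, inf_le_inf_right _ hxy⟩⟩
    rw [← h.inf_sup_inf x, ← h.inf_sup_inf y]
    exact sup_le_sup hxy.1 hxy.2

lemma orderIso_symm_apply (h : IsDirectDecomposition a b) (p : Iic a × Iic b) :
    h.orderIso.symm p = (p.1 : L) ⊔ p.2 :=
  rfl

variable [BoundedOrder L]

lemma isCentral_coe (h : IsDirectDecomposition a b) {w : Iic a} (hw : IsCentral w) :
    IsCentral (w : L) := by
  simpa [h.orderIso_symm_apply] using (hw.prod (isCentral_bot (L := Iic b))).map h.orderIso.symm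

lemma isCentral_left (h : IsDirectDecomposition a b) : IsCentral a :=
  h.isCentral_coe (w := ⊤) isCentral_top

lemma isCentral_inf (h : IsDirectDecomposition a b) {x : L} (hx : IsCentral x) :
    IsCentral (x ⊓ a) :=
  h.isCentral_coe (hx.map h.orderIso).fst

end IsDirectDecomposition

variable [BoundedOrder L]

lemma IsNeutral.isDirectDecomposition {a b : L} (ha : IsNeutral a) (hinf : a ⊓ b = ⊥)
    (hsup : a ⊔ b = ⊤) : IsDirectDecomposition a b where
  inf_sup_inf x := by
    refine le_antisymm (sup_le inf_le_left inf_le_left) ?_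
    have hx : x ≤ (a ⊔ b) ⊓ (a ⊔ x) ⊓ (b ⊔ x) := by simp [hsup]
    rw [ha, hinf, bot_sup_eq, inf_comm a, inf_comm b] at hx
    exact hx
  inf_sup_left u v hu hv :=
    le_antisymm ((inf_le_inf_left a (sup_le_sup_left hv u)).trans (ha.self_inf_sup_le hinf u))
      (le_inf hu le_sup_left)
  inf_sup_right u v hu hv :=
    le_antisymm ((inf_le_inf_left b (by simpa [sup_comm] using sup_le_sup_left hu v)).trans
      (ha.inf_sup_self_le hinf v)) (le_inf hv le_sup_right)

lemma isCentral_iff_exists_isDirectDecomposition {a : L} :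
    IsCentral a ↔ ∃ b, IsDirectDecomposition a b :=
  ⟨fun ⟨ha, b, hinf, hsup⟩ => ⟨b, ha.isDirectDecomposition hinf hsup⟩,
    fun ⟨_, h⟩ => h.isCentral_left⟩

lemma IsCentral.inf {x a : L} (hx : IsCentral x) (ha : IsCentral a) : IsCentral (x ⊓ a) := by
  obtain ⟨b, h⟩ := isCentral_iff_exists_isDirectDecomposition.1 ha
  exact h.isCentral_inf hx

lemma directlyIndecomposable_of_forall_isCentral {M : Type u} [Lattice M] [BoundedOrder M]
    (h : ∀ c : M, IsCentral c → c = ⊥ ∨ c = ⊤) : DirectlyIndecomposable M := by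
  rintro A B ⟨g⟩
  have hc : IsCentral (g.symm (⊤, ⊥)) := (isCentral_top.prod isCentral_bot).map g.symm
  rcases h _ hc with hbot | htop
  · left
    have : ((⊤, ⊥) : A × B) = ⊥ := by rw [← g.apply_symm_apply (⊤, ⊥), hbot, g.map_bot]
    exact subsingleton_of_bot_eq_top (congrArg Prod.fst this).symm
  · right
    have : ((⊤, ⊥) : A × B) = ⊤ := by rw [← g.apply_symm_apply (⊤, ⊥), htop, g.map_top]
    exact subsingleton_of_bot_eq_top (congrArg Prod.snd this)

namespace IsCenterAtom

variable {a b : L}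

lemma inf_eq_bot_of_ne (ha : IsCenterAtom a) (hb : IsCenterAtom b) (hne : a ≠ b) :
    a ⊓ b = ⊥ := by
  rcases (inf_le_left : a ⊓ b ≤ a).lt_or_eq with hlt | heq
  · exact ha.2.2 _ (ha.1.inf hb.1) hlt
  · rcases (inf_eq_left.1 heq).lt_or_eq with hab | hab
    · exact absurd (hb.2.2 a ha.1 hab) ha.2.1
    · exact absurd hab hne

lemma eq_bot_or_eq_top_of_isCentral (ha : IsCenterAtom a) {c : Iic a} (hc : IsCentral c) :
    c = ⊥ ∨ c = ⊤ := by
  obtain ⟨b, h⟩ := isCentral_iff_exists_isDirectDecomposition.1 ha.1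
  rcases c.2.lt_or_eq with hlt | heq
  · exact Or.inl (Subtype.ext (ha.2.2 _ (h.isCentral_coe hc) hlt))
  · exact Or.inr (Subtype.ext heq)

end IsCenterAtom

end DirectDecomposition

def IsSpatial (L : Type*) [CompleteLattice L] : Prop :=
  ∀ x : L, x = sSup {p : L | CompletelySupIrred p ∧ p ≤ x}

section Spatial

variable {L : Type*} [CompleteLattice L]

lemma IsSpatial.le_of_forall (hL : IsSpatial L) {x y : L}
    (h : ∀ q : L, CompletelySupIrred q → q ≤ x → q ≤ y) : x ≤ y := by
  rw [hL x]
  exact sSup_le fun q ⟨hq, hqx⟩ => h q hq hqx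

lemma CompletelySupIrred.le_or_le {p a b : L} (hp : CompletelySupIrred p)
    (h : IsDirectDecomposition a b) : p ≤ a ∨ p ≤ b := by
  by_contra! hpab
  have hlt : ∀ c, ¬p ≤ c → p ⊓ c ≤ sSup {v | v < p} := fun c hc =>
    le_sSup (inf_le_left.lt_of_ne fun heq => hc (inf_eq_left.1 heq))
  have : p ≤ sSup {v | v < p} :=
    calc p = p ⊓ a ⊔ p ⊓ b := (h.inf_sup_inf p).symm
      _ ≤ sSup {v | v < p} := sup_le (hlt a hpab.1) (hlt b hpab.2)
  exact hp.2.not_ge this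

lemma inf_sup_sSup_le [IsCompactlyGenerated L] {x u : L} {S : Set L}
    (hS : ∀ d ∈ S, ∀ w, x ⊓ (w ⊔ d) ≤ w) : x ⊓ (u ⊔ sSup S) ≤ u := by
  classical
  have hfin : ∀ t : Finset L, ↑t ⊆ S → ∀ w, x ⊓ (w ⊔ t.sup id) ≤ w := fun t ht =>
    Finset.sup_induction (p := fun d => ∀ w, x ⊓ (w ⊔ d) ≤ w) (by simp)
      (fun d₁ h₁ d₂ h₂ w => by
        rw [← sup_assoc]
        exact (le_inf inf_le_left (h₂ (w ⊔ d₁))).trans (h₁ w))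
      fun d hd => hS d (ht hd)
  rw [← sSup_insert, inf_sSup_eq_iSup_inf_sup_finset]
  refine iSup₂_le fun t ht => ?_
  have hsub : ↑(t.erase u) ⊆ S := by
    rw [Finset.coe_erase, sdiff_singleton_subset_iff]
    exact ht
  calc x ⊓ t.sup id ≤ x ⊓ (u ⊔ (t.erase u).sup id) := by
        gcongr
        simpa using Finset.sup_mono (f := id) (Finset.insert_erase_subset u t)
    _ ≤ u := hfin _ hsub u

/-- Upper continuity gives `inf_sup_left`; the other two conditions are tested on completely
join-irreducible elements. -/
lemma IsSpatial.isDirectDecomposition [IsCompactlyGenerated L] (hL : IsSpatial L) {a : L}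
    (hsplit : ∀ q : L, CompletelySupIrred q →
      q ≤ a ∨ ∃ d, (IsNeutral d ∧ a ⊓ d = ⊥) ∧ q ≤ d) :
    IsDirectDecomposition a (sSup {d | IsNeutral d ∧ a ⊓ d = ⊥}) := by
  set B := sSup {d | IsNeutral d ∧ a ⊓ d = ⊥}
  have hleft : ∀ u v : L, u ≤ a → v ≤ B → a ⊓ (u ⊔ v) = u := fun u v hu hv =>
    le_antisymm ((inf_le_inf_left a (sup_le_sup_left hv u)).trans
        (inf_sup_sSup_le fun d ⟨hd, had⟩ => hd.inf_sup_self_le (inf_comm a d ▸ had)))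
      (le_inf hu le_sup_left)
  have haB : a ⊓ B = ⊥ := by simpa using hleft ⊥ B bot_le le_rfl
  refine ⟨fun x => le_antisymm (sup_le inf_le_left inf_le_left) ?_, hleft, ?_⟩
  · refine hL.le_of_forall fun q hq hqx => ?_
    rcases hsplit q hq with hqa | ⟨d, hd, hqd⟩
    · exact (le_inf hqx hqa).trans le_sup_left
    · exact (le_inf hqx (hqd.trans (le_sSup hd))).trans le_sup_right
  · refine fun u v hu hv =>
      le_antisymm (hL.le_of_forall fun q hq hqB => ?_) (le_inf hv le_sup_right)
    rcases hsplit q hq with hqa | ⟨d, ⟨hd, had⟩, hqd⟩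
    · exact absurd (le_bot_iff.1 (haB ▸ le_inf hqa (hqB.trans inf_le_left))) hq.1
    · have hdu : d ⊓ u = ⊥ := le_bot_iff.1 (had ▸ inf_comm a d ▸ inf_le_inf_left d hu)
      exact (le_inf hqd (hqB.trans inf_le_right)).trans
        ((inf_le_inf_left d (sup_comm u v).le).trans (hd.self_inf_sup_le hdu v))

lemma IsSpatial.isCentral_sInf [IsCompactlyGenerated L] (hL : IsSpatial L) {C : Set L}
    (hC : ∀ c ∈ C, IsCentral c) : IsCentral (sInf C) := by
  refine (hL.isDirectDecomposition fun q hq => ?_).isCentral_left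
  by_cases hqC : ∀ c ∈ C, q ≤ c
  · exact Or.inl (le_sInf hqC)
  push Not at hqC
  obtain ⟨c, hcC, hqc⟩ := hqC
  obtain ⟨c', h⟩ := isCentral_iff_exists_isDirectDecomposition.1 (hC c hcC)
  refine Or.inr ⟨c', ⟨h.symm.isCentral_left.1, ?_⟩, (hq.le_or_le h).resolve_left hqc⟩
  exact le_bot_iff.1 (h.inf_eq_bot ▸ inf_le_inf_right c' (sInf_le hcC))

lemma IsSpatial.exists_isCenterAtom_ge [IsCompactlyGenerated L] (hL : IsSpatial L) {p : L}
    (hp : CompletelySupIrred p) : ∃ a, IsCenterAtom a ∧ p ≤ a := by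
  set A := sInf {c | IsCentral c ∧ p ≤ c}
  have hpA : p ≤ A := le_sInf fun c hc => hc.2
  refine ⟨A, ⟨hL.isCentral_sInf fun c hc => hc.1, ne_bot_of_le_ne_bot hp.1 hpA,
    fun b hb hbA => ?_⟩, hpA⟩
  obtain ⟨b', h⟩ := isCentral_iff_exists_isDirectDecomposition.1 hb
  rcases hp.le_or_le h with hpb | hpb'
  · exact absurd (sInf_le ⟨hb, hpb⟩ : A ≤ b) hbA.not_ge
  · have hAb' : A ≤ b' := sInf_le ⟨h.symm.isCentral_left, hpb'⟩
    rw [← inf_eq_left.2 (hbA.le.trans hAb'), h.inf_eq_bot]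

lemma IsSpatial.iSup_inf_isCenterAtom [IsCompactlyGenerated L] (hL : IsSpatial L) (x : L) :
    ⨆ a : {a : L // IsCenterAtom a}, x ⊓ a = x := by
  refine le_antisymm (iSup_le fun _ => inf_le_left) (hL.le_of_forall fun q hq hqx => ?_)
  obtain ⟨a, ha, hqa⟩ := hL.exists_isCenterAtom_ge hq
  exact le_iSup_of_le (f := fun a : {a : L // IsCenterAtom a} => x ⊓ a) ⟨a, ha⟩
    (le_inf hqx hqa)

lemma IsCenterAtom.iSup_inf_eq (w : ∀ b : {b : L // IsCenterAtom b}, Iic (b : L))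
    (a : {a : L // IsCenterAtom a}) : (⨆ b, (w b : L)) ⊓ a = w a := by
  obtain ⟨a', h⟩ := isCentral_iff_exists_isDirectDecomposition.1 a.2.1
  have hw : ⨆ b, (w b : L) ≤ (w a : L) ⊔ a' := iSup_le fun b => by
    by_cases hba : b = a
    · subst hba
      exact le_sup_left
    · have hb : (b : L) ⊓ a = ⊥ := b.2.inf_eq_bot_of_ne a.2 fun heq => hba (Subtype.ext heq)
      exact (w b).2.trans ((h.le_right_of_inf_eq_bot hb).trans le_sup_right)
  refine le_antisymm ?_ (le_inf (le_iSup (fun b => (w b : L)) a) (w a).2)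
  calc (⨆ b, (w b : L)) ⊓ a ≤ (a : L) ⊓ ((w a : L) ⊔ a') := by rw [inf_comm]; gcongr
    _ = w a := h.inf_sup_left _ _ (w a).2 le_rfl

def IsSpatial.orderIsoPiCenterAtom [IsCompactlyGenerated L] (hL : IsSpatial L) :
    L ≃o ∀ a : {a : L // IsCenterAtom a}, Iic (a : L) :=
  Equiv.toOrderIso
    { toFun x a := ⟨x ⊓ a, inf_le_right⟩
      invFun w := ⨆ a, (w a : L)
      left_inv := hL.iSup_inf_isCenterAtom
      right_inv w := funext fun a => Subtype.ext (IsCenterAtom.iSup_inf_eq w a) }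
    (fun _ _ hxy _ => inf_le_inf_right _ hxy) (fun _ _ hw => iSup_mono fun a => hw a)

end Spatial

/-- Libkin's Decomposition Theorem: every algebraic and spatial lattice is
isomorphic to a direct product of directly indecomposable lattices. -/
theorem libkin_decomposition {L : Type u} [CompleteLattice L] [IsCompactlyGenerated L]
    (hSpatial : ∀ x : L, x = sSup {p : L | CompletelySupIrred p ∧ p ≤ x}) :
    TotallyDecomposable L :=
  ⟨{a : L // IsCenterAtom a}, fun a => BddLat.of (Iic (a : L)),
    fun a => directlyIndecomposable_of_forall_isCentral fun _ => a.2.eq_bot_or_eq_top_of_isCentral,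
    ⟨IsSpatial.orderIsoPiCenterAtom hSpatial⟩⟩
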